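/- Sign of the θ-derivative of the tilting equation on the negative half-line: if θ ≤ 0 and α ∈ (1/2, 1), then G_θ(θ, α) ≥ 0. -/

import Mathlib

/-!
Write `G_θ(θ, α) = ∫ y w(y) dy` with `w = q* / D²`, where `D(y) = α e^{θy} + (1-α) e^{-θy}`.
Pairing `y` with `-y`, it suffices that `w(-y) ≤ w(y)` for `y ≥ 0`. This holds because the
mixture puts more weight on the positive component (`q*(-y) ≤ q*(y)`), while for `θ ≤ 0` and
`α > 1/2` the tilt is smaller on the positive side (`D(y) ≤ D(-y)`).
-/

open MeasureTheory

/-- The standard Gaussian density. -/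
noncomputable def stdGauss (y : ℝ) : ℝ :=
  (Real.sqrt (2 * Real.pi))⁻¹ * Real.exp (-y ^ 2 / 2)

/-- Density of the two-component mixture `α*·N(θ*,1) + (1-α*)·N(-θ*,1)`. -/
noncomputable def mixDen (θs αs y : ℝ) : ℝ :=
  αs * stdGauss (y - θs) + (1 - αs) * stdGauss (y + θs)

/-- The EM/Sinkhorn-EM map `F(θ, α)`. -/
noncomputable def Fmap (θs αs θ α : ℝ) : ℝ :=
  ∫ y, y * (α * Real.exp (θ * y) - (1 - α) * Real.exp (-(θ * y))) /
      (α * Real.exp (θ * y) + (1 - α) * Real.exp (-(θ * y))) * mixDen θs αs y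

/-- The tilting equation map `G(θ, α)`. -/
noncomputable def Gmap (θs αs θ α : ℝ) : ℝ :=
  ∫ y, α * Real.exp (θ * y) /
      (α * Real.exp (θ * y) + (1 - α) * Real.exp (-(θ * y))) * mixDen θs αs y

/-- The (normalized) `θ`-derivative of the tilting equation, `G_θ(θ, α)`. -/
noncomputable def Gtheta (θs αs θ α : ℝ) : ℝ :=
  ∫ y, y / (α * Real.exp (θ * y) + (1 - α) * Real.exp (-(θ * y))) ^ 2 * mixDen θs αs y

theorem integral_nonneg_of_add_comp_neg_nonneg {G : Type*} [MeasurableSpace G] [AddGroup G]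
    [MeasurableNeg G] {μ : Measure G} [μ.IsNegInvariant] {f : G → ℝ}
    (hf : ∀ x, 0 ≤ f x + f (-x)) : 0 ≤ ∫ x, f x ∂μ := by
  by_cases hint : Integrable f μ
  · have hsum : 0 ≤ ∫ x, (f x + f (-x)) ∂μ := integral_nonneg hf
    rwa [integral_add hint hint.comp_neg, integral_neg_eq_self, ← two_mul,
      mul_nonneg_iff_of_pos_left two_pos] at hsum
  · rw [integral_undef hint]

theorem integral_mul_self_nonneg_of_neg_le {μ : Measure ℝ} [μ.IsNegInvariant] {w : ℝ → ℝ}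
    (hw : ∀ y, 0 ≤ y → w (-y) ≤ w y) : 0 ≤ ∫ y, y * w y ∂μ := by
  refine integral_nonneg_of_add_comp_neg_nonneg fun y ↦ ?_
  rcases le_total 0 y with hy | hy
  · nlinarith [hw y hy]
  · have h := hw (-y) (neg_nonneg.2 hy)
    rw [neg_neg] at h
    nlinarith

lemma stdGauss_neg (y : ℝ) : stdGauss (-y) = stdGauss y := by
  simp only [stdGauss, neg_sq]

lemma stdGauss_le_stdGauss_of_sq_le {a b : ℝ} (h : a ^ 2 ≤ b ^ 2) : stdGauss b ≤ stdGauss a := by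
  unfold stdGauss
  gcongr

lemma mixDen_nonneg (θs : ℝ) {αs : ℝ} (h0 : 0 ≤ αs) (h1 : αs ≤ 1) (y : ℝ) :
    0 ≤ mixDen θs αs y := by
  unfold mixDen stdGauss
  have : 0 ≤ 1 - αs := sub_nonneg.2 h1
  positivity

lemma mixDen_neg_le {θs αs : ℝ} (hθs : 0 ≤ θs) (hαs : 1 / 2 ≤ αs) {y : ℝ} (hy : 0 ≤ y) :
    mixDen θs αs (-y) ≤ mixDen θs αs y := by
  have hmirror : mixDen θs αs (-y) = αs * stdGauss (y + θs) + (1 - αs) * stdGauss (y - θs) := by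
    rw [mixDen, ← stdGauss_neg (-y - θs), ← stdGauss_neg (-y + θs)]
    ring_nf
  have hgauss : stdGauss (y + θs) ≤ stdGauss (y - θs) :=
    stdGauss_le_stdGauss_of_sq_le (by nlinarith)
  rw [hmirror, mixDen]
  nlinarith

noncomputable def tiltDen (α θ y : ℝ) : ℝ :=
  α * Real.exp (θ * y) + (1 - α) * Real.exp (-(θ * y))

lemma tiltDen_pos {α : ℝ} (h0 : 0 < α) (h1 : α ≤ 1) (θ y : ℝ) : 0 < tiltDen α θ y :=
  add_pos_of_pos_of_nonneg (mul_pos h0 (Real.exp_pos _))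
    (mul_nonneg (sub_nonneg.2 h1) (Real.exp_pos _).le)

lemma tiltDen_le_tiltDen_neg {α θ y : ℝ} (hα : 1 / 2 ≤ α) (hθy : θ * y ≤ 0) :
    tiltDen α θ y ≤ tiltDen α θ (-y) := by
  have hexp : Real.exp (θ * y) ≤ Real.exp (-(θ * y)) := Real.exp_le_exp.2 (by linarith)
  simp only [tiltDen, mul_neg, neg_neg]
  nlinarith

lemma mixDen_div_tiltDen_sq_neg_le {θs αs θ α : ℝ} (hθs : 0 ≤ θs) (hαs : 1 / 2 ≤ αs)
    (hαs1 : αs ≤ 1) (hθ : θ ≤ 0) (hα : 1 / 2 ≤ α) (hα1 : α ≤ 1) {y : ℝ} (hy : 0 ≤ y) :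
    mixDen θs αs (-y) / tiltDen α θ (-y) ^ 2 ≤ mixDen θs αs y / tiltDen α θ y ^ 2 := by
  have hDpos : 0 < tiltDen α θ y := tiltDen_pos (by linarith) hα1 θ y
  have hDle : tiltDen α θ y ≤ tiltDen α θ (-y) :=
    tiltDen_le_tiltDen_neg hα (mul_nonpos_of_nonpos_of_nonneg hθ hy)
  exact div_le_div₀ (mixDen_nonneg θs (by linarith) hαs1 y) (mixDen_neg_le hθs hαs hy)
    (pow_pos hDpos 2) (pow_le_pow_left₀ hDpos.le hDle 2)

/-- sign of `G_θ` on the negative half-line: if `θ ≤ 0` and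
`α ∈ (1/2, 1)`, then `G_θ(θ, α) ≥ 0`. -/
theorem Gtheta_nonneg_on_negative_halfline
    (θs αs : ℝ) (hθs : 0 < θs) (hαs : 1 / 2 < αs) (hαs1 : αs < 1)
    (θ : ℝ) (hθ : θ ≤ 0) (α : ℝ) (hα : 1 / 2 < α) (hα1 : α < 1) :
    0 ≤ Gtheta θs αs θ α := by
  have hweight := fun y (hy : 0 ≤ y) ↦ mixDen_div_tiltDen_sq_neg_le hθs.le hαs.le hαs1.le hθ
    hα.le hα1.le hy
  have hG : Gtheta θs αs θ α = ∫ y, y * (mixDen θs αs y / tiltDen α θ y ^ 2) := by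
    simp only [Gtheta, tiltDen, div_mul_eq_mul_div, mul_div_assoc]
  rw [hG]
  exact integral_mul_self_nonneg_of_neg_le hweight
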